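/- Let π = (p_1,...,p_n) be a sequence of distinct keys avoiding the pattern (2,3,1) (i.e., there are no indices i < j < k with p_k < p_i < p_j). Then for every i with 2 ≤ i ≤ n, the key p_i is the smallest sub-root at time i: p_i is the smallest key not in {p_1,...,p_{i−1}} whose parent in BST(π) has its key in {p_1,...,p_{i−1}}. -/

import Mathlib

/-- Binary trees with keys at internal nodes. -/
inductive BT (α : Type) where
  | leaf : BT α
  | node : BT α → α → BT α → BT α
deriving DecidableEq

namespace BT

variable {α : Type} [LinearOrder α]

/-- The list of keys of a tree, in symmetric (inorder) order. -/
def keys : BT α → List α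
  | leaf => []
  | node l v r => keys l ++ v :: keys r

/-- The number of nodes of a tree. -/
def size : BT α → ℕ
  | leaf => 0
  | node l _ r => size l + size r + 1

/-- The symmetric-order (binary search tree) property. -/
def IsBST : BT α → Prop
  | leaf => True
  | node l v r => (∀ x ∈ l.keys, x < v) ∧ (∀ x ∈ r.keys, v < x) ∧ l.IsBST ∧ r.IsBST

/-- Preorder of a binary tree: root, then left subtree, then right subtree. -/
def preorder : BT α → List α
  | leaf => []
  | node l v r => v :: (preorder l ++ preorder r)

/-- Postorder of a binary tree: left subtree, right subtree, then root. -/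
def postorder : BT α → List α
  | leaf => []
  | node l v r => postorder l ++ postorder r ++ [v]

/-- Reversed preorder: root, then right subtree, then left subtree
(the preorder of the mirror image). -/
def revPreorder : BT α → List α
  | leaf => []
  | node l v r => v :: (revPreorder r ++ revPreorder l)

/-- Standard leaf insertion into a binary search tree. -/
def insertKey : BT α → α → BT α
  | leaf, x => node leaf x leaf
  | node l v r, x =>
    if x < v then node (insertKey l x) v r
    else if v < x then node l v (insertKey r x)
    else node l v r

/-- The depth (number of edges from the root) of the node with key `x`,
located by binary search. -/
def depthOf : BT α → α → ℕ
  | leaf, _ => 0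
  | node l v r, x =>
    if x < v then depthOf l x + 1
    else if v < x then depthOf r x + 1
    else 0

/-- The search path to the key `x`: `false` records a step to a left child,
`true` a step to a right child. -/
def pathTo : BT α → α → List Bool
  | leaf, _ => []
  | node l v r, x =>
    if x < v then false :: pathTo l x
    else if v < x then true :: pathTo r x
    else []

/-- The left-depth of the node with key `x`: the number of left-child edges
on the path from the root to it. -/
def leftDepthKey : BT α → α → ℕ
  | leaf, _ => 0
  | node l v r, x =>
    if x < v then leftDepthKey l x + 1
    else if v < x then leftDepthKey r x
    else 0

/-- The subtree rooted at the node with key `x` (empty if `x` is absent). -/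
def subtreeAt : BT α → α → BT α
  | leaf, _ => leaf
  | node l v r, x =>
    if x < v then subtreeAt l x
    else if v < x then subtreeAt r x
    else node l v r

/-- The key at the root, if any. -/
def rootKey : BT α → Option α
  | leaf => none
  | node _ v _ => some v

/-- The key of the parent of the node with key `x`, if any. -/
def parentKey : BT α → α → Option α
  | leaf, _ => none
  | node l v r, x =>
    if x < v then (if l.rootKey = some x then some v else l.parentKey x)
    else if v < x then (if r.rootKey = some x then some v else r.parentKey x)
    else none

/-- A step of the context (zipper) describing the search path from the root
to the current subtree: `inL v r` means the current subtree is the left child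
of a node with key `v` and right subtree `r`; `inR l v` means it is the right
child of a node with key `v` and left subtree `l`. -/
inductive Ctx (α : Type) where
  | inL : α → BT α → Ctx α
  | inR : BT α → α → Ctx α

/-- Descend along the search path for `x`, recording the context.
The head of the returned list corresponds to the immediate parent. -/
def descend : BT α → α → List (Ctx α) → List (Ctx α) × BT α
  | leaf, _, acc => (acc, leaf)
  | node l v r, x, acc =>
    if x < v then descend l x (Ctx.inL v r :: acc)
    else if v < x then descend r x (Ctx.inR l v :: acc)
    else (acc, node l v r)

/-- Reattach a subtree into its context, with no rotations. -/
def rebuild : BT α → List (Ctx α) → BT α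
  | t, [] => t
  | t, Ctx.inL v r :: cs => rebuild (node t v r) cs
  | t, Ctx.inR l v :: cs => rebuild (node l v t) cs

/-- Bottom-up splay steps: repeatedly apply zig / zig-zig / zig-zag steps to
the current subtree (rooted at the node being splayed) until the context is
exhausted. -/
def splayLoop : BT α → List (Ctx α) → BT α
  | t, [] => t
  | node a x b, [Ctx.inL v r] => node a x (node b v r)          -- zig
  | node a x b, [Ctx.inR l v] => node (node l v a) x b          -- zig
  | node a x b, Ctx.inL p pr :: Ctx.inL g gr :: cs =>           -- zig-zig
      splayLoop (node a x (node b p (node pr g gr))) cs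
  | node a x b, Ctx.inL p pr :: Ctx.inR gl g :: cs =>           -- zig-zag
      splayLoop (node (node gl g a) x (node b p pr)) cs
  | node a x b, Ctx.inR pl p :: Ctx.inR gl g :: cs =>           -- zig-zig
      splayLoop (node (node (node gl g pl) p a) x b) cs
  | node a x b, Ctx.inR pl p :: Ctx.inL g gr :: cs =>           -- zig-zag
      splayLoop (node (node pl p a) x (node b g gr)) cs
  | leaf, cs => rebuild leaf cs   -- unreachable when the splayed key is present

/-- Splaying the key `x`: if `x` occurs in the tree, bring its node to the
root by bottom-up splay steps; otherwise leave the tree unchanged. -/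
def splay (x : α) (t : BT α) : BT α :=
  match descend t x [] with
  | (_, leaf) => t
  | (cs, found) => splayLoop found cs

/-- `α`-weight-balance in the sense of Nievergelt–Reingold:
at each node, `min(|L|,|R|) + 1 ≥ α * (|x| + 1)`. -/
def WeightBalanced (a : ℝ) : BT α → Prop
  | leaf => True
  | node l _ r =>
      (min l.size r.size + 1 : ℝ) ≥ a * ((l.size + r.size + 1 : ℕ) + 1 : ℝ) ∧
      WeightBalanced a l ∧ WeightBalanced a r

/-- The rank of `x` in `t`: the number of keys of `t` that are `≤ x`. -/
def rank (t : BT α) (x : α) : ℕ := (t.keys.filter (fun y => y ≤ x)).length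

end BT

section Defs

variable {α : Type} [LinearOrder α]

/-- The insertion tree of a sequence: leaf-insert the keys in order. -/
def bstOf (π : List α) : BT α := π.foldl BT.insertKey BT.leaf

/-- `q` is a sub-root: a node of `t` not yet touched whose parent is touched,
where `touched` is the list of touched keys. -/
def IsSubRoot (t : BT α) (touched : List α) (q : α) : Prop :=
  q ∈ t.keys ∧ q ∉ touched ∧ ∃ p, t.parentKey q = some p ∧ p ∈ touched

/-- π avoids the pattern (2,3,1). -/
def Avoids231 (π : List α) : Prop :=
  ¬ ∃ i j k : Fin π.length, i < j ∧ j < k ∧ π.get k < π.get i ∧ π.get i < π.get j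

/-- π avoids the pattern (3,1,2). -/
def Avoids312 (π : List α) : Prop :=
  ¬ ∃ i j k : Fin π.length, i < j ∧ j < k ∧ π.get j < π.get k ∧ π.get k < π.get i

/-- π avoids the pattern (2,1,3). -/
def Avoids213 (π : List α) : Prop :=
  ¬ ∃ i j k : Fin π.length, i < j ∧ j < k ∧ π.get j < π.get i ∧ π.get i < π.get k

/-- π contains a strictly decreasing subsequence of length `k`. -/
def HasDecreasingSubseq (π : List α) (k : ℕ) : Prop :=
  ∃ s : List α, s.Sublist π ∧ s.length = k ∧ s.Chain' (· > ·)

/-- Splay the keys of a list in order, starting from `t`. -/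
def splaySeq (π : List α) (t : BT α) : BT α := π.foldl (fun s x => BT.splay x s) t

/-- The cost of splaying a sequence of keys starting from `t`:
each splay costs the current depth of the requested key plus one. -/
def splayCost : BT α → List α → ℕ
  | _, [] => 0
  | t, x :: xs => (t.depthOf x + 1) + splayCost (BT.splay x t) xs

/-- The cost of insertion splaying a sequence of keys starting from `t`:
each key is leaf-inserted, then the new node is splayed, at a cost of
its depth after insertion plus one. -/
def insertSplayCost : BT α → List α → ℕ
  | _, [] => 0
  | t, x :: xs =>
    ((t.insertKey x).depthOf x + 1) + insertSplayCost (BT.splay x (t.insertKey x)) xs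

/-- `DF rk xs` = Σ_{i≥2} log₂(|rk(x_i) − rk(x_{i−1})| + 1). -/
noncomputable def DF (rk : α → ℕ) (xs : List α) : ℝ :=
  ((xs.zip xs.tail).map
    (fun p => Real.logb 2 (|(rk p.2 : ℝ) - (rk p.1 : ℝ)| + 1))).sum

/-- The rank of `x` within the sequence `σ` itself. -/
def rankIn (σ : List α) (x : α) : ℕ := (σ.filter (fun y => y ≤ x)).length

/-- The dynamic-finger sum of a sequence, with ranks computed in the
sequence itself. -/
noncomputable def DFseq (σ : List α) : ℝ := DF (rankIn σ) σ

/-!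
A (2,3,1)-avoiding sequence `x :: rest` of distinct keys reads `x`, then all keys of `rest` smaller
than `x`, then all larger ones; by induction it is therefore the preorder of its insertion tree.
In a search tree whose touched keys form a prefix of the preorder, the remaining preorder is the
concatenation of the pending subtrees hanging from touched nodes, from left to right; the next
preorder key is the root of the leftmost one, and all other sub-roots lie to its right.
-/

lemma List.exists_of_append_eq_append_cons {α : Type} {l₁ l₂ A B : List α} {x : α}
    (h : l₁ ++ l₂ = A ++ x :: B) :
    (∃ B₁, l₁ = A ++ x :: B₁) ∨ ∃ A₂, A = l₁ ++ A₂ ∧ l₂ = A₂ ++ x :: B := by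
  rcases List.append_eq_append_iff.mp h with ⟨A₂, hA, hl₂⟩ | ⟨_ | ⟨b, B₁⟩, hl₁, hxB⟩
  · exact .inr ⟨A₂, hA, hl₂⟩
  · exact .inr ⟨[], by simpa using hl₁.symm, hxB.symm⟩
  · obtain ⟨rfl, -⟩ := List.cons.inj hxB
    exact .inl ⟨B₁, hl₁⟩

namespace BT

variable {α : Type}

@[simp] lemma mem_keys_node {l r : BT α} {v x : α} :
    x ∈ (node l v r).keys ↔ x ∈ l.keys ∨ x = v ∨ x ∈ r.keys := by
  simp [keys]

@[simp] lemma mem_preorder {t : BT α} {x : α} : x ∈ t.preorder ↔ x ∈ t.keys := by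
  induction t with
  | leaf => rfl
  | node l v r ihl ihr => simp [preorder, ihl, ihr, or_left_comm]

lemma mem_keys_of_rootKey {t : BT α} {q : α} (h : t.rootKey = some q) : q ∈ t.keys := by
  cases t with
  | leaf => cases h
  | node l v r => cases h; simp

variable [LinearOrder α]

lemma parentKey_of_rootKey {t : BT α} {q : α} (h : t.rootKey = some q) : t.parentKey q = none := by
  cases t with
  | leaf => cases h
  | node l v r => cases h; simp [parentKey]

lemma mem_keys_of_parentKey {t : BT α} {q p : α} (h : t.parentKey q = some p) : p ∈ t.keys := by
  induction t with
  | leaf => cases h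
  | node l v r ihl ihr =>
    simp only [parentKey] at h
    split_ifs at h
    · cases h; simp
    · simp [ihl h]
    · cases h; simp
    · simp [ihr h]

lemma foldl_insertKey_node_of_forall_lt {l r : BT α} {v : α} {s : List α} (hs : ∀ a ∈ s, a < v) :
    s.foldl insertKey (node l v r) = node (s.foldl insertKey l) v r := by
  induction s generalizing l with
  | nil => rfl
  | cons a s ih =>
    simp only [List.forall_mem_cons] at hs
    simp only [List.foldl_cons, insertKey, if_pos hs.1]
    exact ih hs.2

lemma foldl_insertKey_node_of_forall_gt {l r : BT α} {v : α} {s : List α} (hs : ∀ a ∈ s, v < a) :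
    s.foldl insertKey (node l v r) = node l v (s.foldl insertKey r) := by
  induction s generalizing r with
  | nil => rfl
  | cons a s ih =>
    simp only [List.forall_mem_cons] at hs
    simp only [List.foldl_cons, insertKey, if_neg hs.1.asymm, if_pos hs.1]
    exact ih hs.2

end BT

section Avoidance

variable {α : Type} [LinearOrder α]

open BT

lemma Avoids231.sublist {π π' : List α} (h : Avoids231 π) (hs : π'.Sublist π) : Avoids231 π' := by
  obtain ⟨f, hf⟩ := List.sublist_iff_exists_fin_orderEmbedding_get_eq.mp hs
  rintro ⟨i, j, k, hij, hjk, hki, hij'⟩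
  exact h ⟨f i, f j, f k, f.strictMono hij, f.strictMono hjk,
    by simpa only [hf] using hki, by simpa only [hf] using hij'⟩

lemma not_avoids231_of_lt {a b c : α} (hca : c < a) (hab : a < b) : ¬ Avoids231 [a, b, c] :=
  fun h => h ⟨0, 1, 2, by simp, by simp [Fin.lt_def], hca, hab⟩

lemma Avoids231.exists_split {x : α} {rest : List α} (hnd : (x :: rest).Nodup)
    (hav : Avoids231 (x :: rest)) :
    ∃ S L, rest = S ++ L ∧ (∀ a ∈ S, a < x) ∧ ∀ a ∈ L, x < a := by
  induction rest with
  | nil => exact ⟨[], [], rfl, by simp, by simp⟩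
  | cons y tail ih =>
    obtain ⟨hxy, hxtail⟩ : x ≠ y ∧ x ∉ tail := by simpa using (List.nodup_cons.mp hnd).1
    rcases hxy.lt_or_gt with hxy | hyx
    · refine ⟨[], y :: tail, rfl, by simp, ?_⟩
      simp only [List.forall_mem_cons]
      refine ⟨hxy, fun a ha => lt_of_le_of_ne ?_ (ne_of_mem_of_not_mem ha hxtail).symm⟩
      exact not_lt.mp fun hax => not_avoids231_of_lt hax hxy
        (hav.sublist (((List.singleton_sublist.mpr ha).cons_cons y).cons_cons x))
    · obtain ⟨S, L, rfl, hS, hL⟩ := ih (hnd.sublist (.cons_cons x (.cons y (.refl tail))))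
        (hav.sublist (.cons_cons x (.cons y (.refl tail))))
      exact ⟨y :: S, L, rfl, List.forall_mem_cons.mpr ⟨hyx, hS⟩, hL⟩

lemma bstOf_cons_append {x : α} {S L : List α} (hS : ∀ a ∈ S, a < x) (hL : ∀ a ∈ L, x < a) :
    bstOf (x :: (S ++ L)) = node (bstOf S) x (bstOf L) := by
  simp only [bstOf, List.foldl_cons, List.foldl_append, insertKey]
  rw [foldl_insertKey_node_of_forall_lt hS, foldl_insertKey_node_of_forall_gt hL]

theorem preorder_bstOf_and_isBST_of_avoids231 :
    ∀ {π : List α}, π.Nodup → Avoids231 π → (bstOf π).preorder = π ∧ (bstOf π).IsBST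
  | [], _, _ => ⟨rfl, trivial⟩
  | x :: rest, hnd, hav => by
    obtain ⟨S, L, rfl, hS, hL⟩ := hav.exists_split hnd
    have hsubS : S.Sublist (x :: (S ++ L)) := (List.sublist_append_left S L).cons x
    have hsubL : L.Sublist (x :: (S ++ L)) := (List.sublist_append_right S L).cons x
    have ihS := preorder_bstOf_and_isBST_of_avoids231 (hnd.sublist hsubS) (hav.sublist hsubS)
    have ihL := preorder_bstOf_and_isBST_of_avoids231 (hnd.sublist hsubL) (hav.sublist hsubL)
    rw [bstOf_cons_append hS hL]
    refine ⟨by simp only [preorder, ihS.1, ihL.1], ?_, ?_, ihS.2, ihL.2⟩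
    · intro a ha
      exact hS a (ihS.1 ▸ mem_preorder.mpr ha)
    · intro a ha
      exact hL a (ihL.1 ▸ mem_preorder.mpr ha)
termination_by π => π.length
decreasing_by all_goals subst_vars; simp

end Avoidance

section SubRoots

variable {α : Type} [LinearOrder α]

open BT

/-- The sub-roots of `t` when its root hangs below a touched node. -/
def IsFrontier (t : BT α) (touched : List α) (q : α) : Prop :=
  (t.rootKey = some q ∧ q ∉ touched) ∨ IsSubRoot t touched q

variable {t l r : BT α} {touched : List α} {q v : α}

lemma IsFrontier.mem_keys (h : IsFrontier t touched q) : q ∈ t.keys :=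
  h.elim (fun h => mem_keys_of_rootKey h.1) (·.1)

lemma IsFrontier.not_mem (h : IsFrontier t touched q) : q ∉ touched :=
  h.elim (·.2) (·.2.1)

lemma not_isFrontier_of_forall_mem (h : ∀ y ∈ t.keys, y ∈ touched) : ¬ IsFrontier t touched q :=
  fun hq => hq.not_mem (h q hq.mem_keys)

lemma not_isSubRoot_of_forall_not_mem (h : ∀ y ∈ t.keys, y ∉ touched) :
    ¬ IsSubRoot t touched q :=
  fun ⟨_, _, _, hp, hpt⟩ => h _ (mem_keys_of_parentKey hp) hpt

lemma isFrontier_iff_isSubRoot (h : ∀ v ∈ t.rootKey, v ∈ touched) :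
    IsFrontier t touched q ↔ IsSubRoot t touched q :=
  or_iff_right fun hq => hq.2 (h q hq.1)

lemma isSubRoot_node_iff (hl : ∀ x ∈ l.keys, x < v) (hr : ∀ x ∈ r.keys, v < x)
    (hv : v ∈ touched) :
    IsSubRoot (node l v r) touched q ↔ IsFrontier l touched q ∨ IsFrontier r touched q := by
  rcases lt_trichotomy q v with hqv | rfl | hvq
  · have hqr : q ∉ r.keys := fun h => (hr q h).asymm hqv
    rw [or_iff_left fun h => hqr h.mem_keys]
    by_cases hroot : l.rootKey = some q
    · simp [IsSubRoot, IsFrontier, parentKey, hqv, hroot, hv, mem_keys_of_rootKey hroot,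
        parentKey_of_rootKey hroot]
    · simp [IsSubRoot, IsFrontier, parentKey, hqv, hroot, hqv.ne, hqr]
  · exact iff_of_false (fun h => h.2.1 hv) (fun h => h.elim (·.not_mem hv) (·.not_mem hv))
  · have hql : q ∉ l.keys := fun h => (hl q h).asymm hvq
    rw [or_iff_right fun h => hql h.mem_keys]
    by_cases hroot : r.rootKey = some q
    · simp [IsSubRoot, IsFrontier, parentKey, hvq, hvq.asymm, hroot, hv,
        mem_keys_of_rootKey hroot, parentKey_of_rootKey hroot]
    · simp [IsSubRoot, IsFrontier, parentKey, hvq, hvq.asymm, hroot, hvq.ne', hql]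

end SubRoots

section SmallestSubRoot

variable {α : Type} [LinearOrder α]

open BT

theorem isLeast_isFrontier_of_preorder_eq {t : BT α} (ht : t.IsBST) {A B touched : List α} {x : α}
    (hpre : t.preorder = A ++ x :: B) (htouched : ∀ y ∈ t.keys, y ∈ touched ↔ y ∈ A) :
    IsLeast {q | IsFrontier t touched q} x := by
  induction t generalizing A B x with
  | leaf => simp [preorder] at hpre
  | node l v r ihl ihr =>
    obtain ⟨hl, hr, hbl, hbr⟩ := ht
    cases A with
    | nil =>
      obtain ⟨rfl, -⟩ := List.cons.inj hpre
      have hfresh : ∀ y ∈ (node l v r).keys, y ∉ touched := by simpa using htouched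
      refine ⟨.inl ⟨rfl, hfresh v (by simp)⟩, fun q hq => ?_⟩
      rcases hq with ⟨hq, -⟩ | hq
      · exact (Option.some.inj hq).le
      · exact absurd hq (not_isSubRoot_of_forall_not_mem hfresh)
    | cons a A =>
      simp only [preorder, List.cons_append, List.cons.injEq] at hpre
      obtain ⟨rfl, hpre⟩ := hpre
      have hv : v ∈ touched := (htouched v (by simp)).mpr (by simp)
      have hsplit : {q | IsFrontier (node l v r) touched q} =
          {q | IsFrontier l touched q} ∪ {q | IsFrontier r touched q} := by
        ext q
        exact (isFrontier_iff_isSubRoot (by simpa [rootKey] using hv)).trans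
          (isSubRoot_node_iff hl hr hv)
      rw [hsplit]
      rcases List.exists_of_append_eq_append_cons hpre with ⟨B₁, hpl⟩ | ⟨A₂, rfl, hpr⟩
      · have hxl : x ∈ l.keys := by simp [← mem_preorder, hpl]
        have hleast := ihl hbl hpl fun y hy =>
          (htouched y (by simp [hy])).trans (by simp [(hl y hy).ne])
        exact ⟨.inl hleast.1, fun q hq =>
          hq.elim (hleast.2 ·) fun hq => ((hl x hxl).trans (hr q hq.mem_keys)).le⟩
      · have hl_touched : ∀ y ∈ l.keys, y ∈ touched := fun y hy =>
          (htouched y (by simp [hy])).mpr (by simp [hy])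
        have hleast := ihr hbr hpr fun y hy =>
          have hyl : y ∉ l.keys := fun h => (hl y h).asymm (hr y hy)
          (htouched y (by simp [hy])).trans (by simp [(hr y hy).ne', hyl])
        exact ⟨.inr hleast.1, fun q hq =>
          hq.elim (absurd · (not_isFrontier_of_forall_mem hl_touched)) (hleast.2 ·)⟩

theorem isLeast_isSubRoot_of_preorder_eq {t : BT α} (ht : t.IsBST) {A B : List α} {x : α}
    (hpre : t.preorder = A ++ x :: B) (hA : A ≠ []) :
    IsLeast {q | IsSubRoot t A q} x := by
  have hroot : ∀ v ∈ t.rootKey, v ∈ A := by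
    cases t with
    | leaf => simp [rootKey]
    | node l v r =>
      obtain ⟨a, A, rfl⟩ := List.exists_cons_of_ne_nil hA
      obtain ⟨rfl, -⟩ := List.cons.inj hpre
      simp [rootKey]
  simpa only [isFrontier_iff_isSubRoot hroot] using
    isLeast_isFrontier_of_preorder_eq ht hpre fun _ _ => Iff.rfl

end SmallestSubRoot

/-- For a (2,3,1)-avoiding sequence of distinct keys, each key after the first
is, at the time of its insertion, the smallest sub-root of the insertion tree:
the smallest key outside the already-inserted prefix whose parent's key lies
in the prefix. -/
theorem smallest_subroot_of_avoids231 {α : Type} [LinearOrder α]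
    (π : List α) (hnd : π.Nodup) (hav : Avoids231 π)
    (i : Fin π.length) (hi : 1 ≤ i.val) :
    IsSubRoot (bstOf π) (π.take i.val) (π.get i) ∧
      ∀ q, IsSubRoot (bstOf π) (π.take i.val) q → π.get i ≤ q := by
  obtain ⟨hpre, hbst⟩ := preorder_bstOf_and_isBST_of_avoids231 hnd hav
  have hsplit : (bstOf π).preorder = π.take i ++ π.get i :: π.drop (i + 1) := by
    rw [hpre, List.get_eq_getElem, List.getElem_cons_drop, List.take_append_drop]
  have hne : π.take i ≠ [] := List.ne_nil_of_length_pos (by rw [List.length_take]; omega)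
  have hleast := isLeast_isSubRoot_of_preorder_eq hbst hsplit hne
  exact ⟨hleast.1, fun q hq => hleast.2 hq⟩
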